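/- arXiv:math/0104058 — 3 statements merged into one kernel-verified Lean document; each statement's English description precedes it below -/
import Mathlib

section
/- Let $x$, $y$, $n$ be nonnegative integers with $x+y>0$ and $n\ge 1$. Let $K_n(x,y)$ be the $n\times n$ matrix with rational entries $K_{i,j}=\frac{(x+y+i+j-1)!}{(x+2i-j)!\,(y+2j-i)!}$ for $1\le i,j\le n$, where an entry is interpreted as $0$ whenever $x+2i-j<0$ or $y+2j-i<0$. Then $\det K_n(x,y)=\prod_{j=1}^{n}\frac{(j-1)!\,(x+y+j)!\,(2x+y+2j+1)_{j-1}\,(x+2y+2j+1)_{j-1}}{(x+2j-1)!\,(y+2j-1)!}$. -/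
/-- Factorial of an integer assumed nonnegative (via `Int.toNat`). -/
def ifact (m : ℤ) : ℚ := (m.toNat.factorial : ℚ)

/-- Reciprocal of the factorial of an integer, with the convention
`1/m! = 0` for negative integers `m`. -/
def invfact (m : ℤ) : ℚ := if m < 0 then 0 else 1 / (m.toNat.factorial : ℚ)

/-- The shifted factorial (Pochhammer symbol) `(a)_k = a(a+1)⋯(a+k-1)`. -/
def poch (a : ℤ) (k : ℕ) : ℤ := ∏ i ∈ Finset.range k, (a + i)

/-!
By the Desnanot–Jacobi identity, `det K_{n+2}(x,y) · det K_n(x+1,y+1)` equals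
`det K_{n+1}(x,y) · det K_{n+1}(x+1,y+1) - det K_{n+1}(x+2,y-1) · det K_{n+1}(x-1,y+2)`, since the
minors of `K_{n+2}(x,y)` obtained by deleting first/last rows and columns are again `K`-matrices with
shifted parameters. The recursion leaves the nonnegative integers, so `x`, `y` range over integers
with `x + y ≥ 0`. If `x ≤ -2` (or `y ≤ -2`) the first row (column) vanishes, and otherwise the interior
minor is a positive product, so it suffices that the product formula satisfies the same recurrence.
After dividing out, this is the polynomial identity
`(x+y+m+3)(x+2m+3)(y+2m+3) - (x+y+2)(x+1)(y+1) = (m+1)(2x+y+2m+5)(x+2y+2m+5)`.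
-/

namespace Matrix

variable {R : Type*} [CommRing R]

theorem det_submatrix_mul_det_submatrix_swap {α β : Type*} [Fintype α] [DecidableEq α]
    [Fintype β] [DecidableEq β] (X Y : Matrix β β R) (e f : α ≃ β) :
    (X.submatrix e f).det * (Y.submatrix f e).det = X.det * Y.det := by
  set σ : Equiv.Perm α := f.trans e.symm
  have hX : X.submatrix e f = (X.submatrix e e).submatrix id σ := by ext; simp [σ]
  have hY : Y.submatrix f e = (Y.submatrix f f).submatrix id ⇑σ⁻¹ := by
    ext; simp [σ, Equiv.Perm.inv_def]
  rw [hX, hY, det_permute', det_permute', det_submatrix_equiv_self, det_submatrix_equiv_self,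
    Equiv.Perm.sign_inv]
  have hsign : ((Equiv.Perm.sign σ : ℤ) : R) * (Equiv.Perm.sign σ : ℤ) = 1 := by
    rw [← Int.cast_mul, ← Units.val_mul, Int.units_mul_self, Units.val_one, Int.cast_one]
  linear_combination X.det * Y.det * hsign

theorem det_mul_det_toBlocks₁₁ {ι : Type*} [Fintype ι] [DecidableEq ι]
    (N : Matrix (ι ⊕ Fin 2) (ι ⊕ Fin 2) R) (h : IsUnit N.toBlocks₁₁.det) :
    N.det * N.toBlocks₁₁.det =
      (N.submatrix (Sum.map id fun _ : Fin 1 => 0) (Sum.map id fun _ : Fin 1 => 0)).det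
        * (N.submatrix (Sum.map id fun _ : Fin 1 => 1) (Sum.map id fun _ : Fin 1 => 1)).det
      - (N.submatrix (Sum.map id fun _ : Fin 1 => 1) (Sum.map id fun _ : Fin 1 => 0)).det
        * (N.submatrix (Sum.map id fun _ : Fin 1 => 0) (Sum.map id fun _ : Fin 1 => 1)).det := by
  let := invertibleOfIsUnitDet _ h
  set S := N.toBlocks₂₂ - N.toBlocks₂₁ * ⅟N.toBlocks₁₁ * N.toBlocks₁₂
  have hN : N.det = N.toBlocks₁₁.det * S.det := by
    conv_lhs => rw [← N.fromBlocks_toBlocks]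
    exact det_fromBlocks₁₁ ..
  have minor (a b : Fin 2) :
      (N.submatrix (Sum.map id fun _ : Fin 1 => a) (Sum.map id fun _ : Fin 1 => b)).det
        = N.toBlocks₁₁.det * S a b := by
    have hblocks : N.submatrix (Sum.map id fun _ : Fin 1 => a) (Sum.map id fun _ : Fin 1 => b)
        = fromBlocks N.toBlocks₁₁ (N.toBlocks₁₂.submatrix id fun _ => b)
            (N.toBlocks₂₁.submatrix (fun _ => a) id)
            (N.toBlocks₂₂.submatrix (fun _ => a) fun _ => b) := by
      ext (i | i) (j | j) <;> rfl
    rw [hblocks, det_fromBlocks₁₁, det_fin_one]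
    simp [S, mul_apply]
  rw [hN, det_fin_two, minor, minor, minor, minor]
  ring

theorem det_mul_det_interior {n : ℕ} (M : Matrix (Fin (n + 2)) (Fin (n + 2)) R)
    (h : IsUnit (M.submatrix (fun k : Fin n => k.succ.castSucc) fun k => k.succ.castSucc).det) :
    M.det * (M.submatrix (fun k : Fin n => k.succ.castSucc) fun k => k.succ.castSucc).det =
      (M.submatrix Fin.castSucc Fin.castSucc).det * (M.submatrix Fin.succ Fin.succ).det
      - (M.submatrix Fin.succ Fin.castSucc).det * (M.submatrix Fin.castSucc Fin.succ).det := by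
  -- `e` lists the interior indices first and then the corners `last` and `0`
  let e : Fin n ⊕ Fin 2 ≃ Fin (n + 2) := finSumFinEquiv.trans (finRotate _)
  let eFirst : Fin n ⊕ Fin 1 ≃ Fin (n + 1) := finSumFinEquiv.trans (finRotate _)
  have e_inl (k : Fin n) : e (.inl k) = k.succ.castSucc := finRotate_of_lt (by simp)
  have e_inr_zero : e (.inr 0) = Fin.last _ := finRotate_of_lt (by simp)
  have e_inr_one : e (.inr 1) = 0 := finRotate_last'
  have eFirst_inl (k : Fin n) : eFirst (.inl k) = k.succ := finRotate_of_lt (by simp)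
  have eFirst_inr : eFirst (.inr 0) = 0 := finRotate_last'
  have hlast : e ∘ Sum.map id (fun _ : Fin 1 => 0) = Fin.succ ∘ finSumFinEquiv := by
    funext k
    rcases k with k | k
    · exact e_inl k
    · simp [Fin.fin_one_eq_zero k, e_inr_zero]; rfl
  have hfirst : e ∘ Sum.map id (fun _ : Fin 1 => 1) = Fin.castSucc ∘ eFirst := by
    funext k
    rcases k with k | k
    · simp [e_inl, eFirst_inl]
    · simp [Fin.fin_one_eq_zero k, e_inr_one, eFirst_inr]
  have hinterior : (M.submatrix e e).toBlocks₁₁ =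
      M.submatrix (fun k : Fin n => k.succ.castSucc) fun k => k.succ.castSucc := by
    ext i j
    simp [toBlocks₁₁, e_inl]
  have := det_mul_det_toBlocks₁₁ (M.submatrix e e) (hinterior ▸ h)
  simp only [submatrix_submatrix, hlast, hfirst, hinterior, det_submatrix_equiv_self] at this
  simp only [← submatrix_submatrix, det_submatrix_equiv_self,
    det_submatrix_mul_det_submatrix_swap] at this
  rw [this]; ring

end Matrix

open Nat

lemma ifact_natCast (m : ℕ) : ifact m = m ! := by
  simp [ifact]

lemma invfact_natCast (m : ℕ) : invfact m = 1 / m ! := by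
  simp [invfact]

lemma ifact_pos (m : ℤ) : 0 < ifact m := by
  unfold ifact; positivity

lemma invfact_pos {m : ℤ} (hm : 0 ≤ m) : 0 < invfact m := by
  rw [invfact, if_neg (not_lt.2 hm)]; positivity

lemma invfact_of_neg {m : ℤ} (hm : m < 0) : invfact m = 0 := if_pos hm

lemma ifact_add_one {m : ℤ} (hm : 0 ≤ m) : ifact (m + 1) = (m + 1) * ifact m := by
  lift m to ℕ using hm
  rw [← Nat.cast_succ, ifact_natCast, ifact_natCast, Nat.factorial_succ]
  push_cast; ring

lemma invfact_eq_mul_invfact_add_one (m : ℤ) : invfact m = (m + 1) * invfact (m + 1) := by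
  rcases lt_trichotomy m (-1) with hm | rfl | hm
  · rw [invfact_of_neg (by omega), invfact_of_neg (by omega), mul_zero]
  · simp [invfact]
  · lift m to ℕ using (by omega)
    rw [← Nat.cast_succ, invfact_natCast, invfact_natCast, Nat.factorial_succ]
    push_cast
    field_simp

lemma ifact_shift {a : ℤ} (ha : 0 ≤ a) :
    ifact (a + 1) * ifact (a + 1) * (a + 2) = ifact (a + 2) * ifact a * (a + 1) := by
  rw [show a + 2 = a + 1 + 1 by ring, ifact_add_one (m := a + 1) (by omega), ifact_add_one ha]
  push_cast; ring

lemma invfact_shift (b : ℤ) :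
    invfact (b + 2) * invfact (b - 1) * (b + 2) = invfact (b + 1) * invfact b * b := by
  have h₀ := invfact_eq_mul_invfact_add_one (b - 1)
  have h₁ := invfact_eq_mul_invfact_add_one b
  have h₂ := invfact_eq_mul_invfact_add_one (b + 1)
  rw [sub_add_cancel] at h₀
  rw [add_assoc, one_add_one_eq_two] at h₂
  rw [h₀, h₁, h₂]
  push_cast; ring

lemma poch_succ (a : ℤ) (k : ℕ) : poch a (k + 1) = a * poch (a + 1) k := by
  rw [poch, Finset.prod_range_succ', Nat.cast_zero, add_zero, mul_comm]
  congr 1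
  exact Finset.prod_congr rfl fun i _ => by push_cast; ring

lemma poch_pos {a : ℤ} (ha : 0 < a) (k : ℕ) : 0 < poch a k :=
  Finset.prod_pos fun _ _ => by positivity

-- The `(j+1)`-st factor of the product formula, for integer `x`, `y`. All lemmas assume
-- `x + y ≥ 0`, which keeps the argument of `ifact` positive, away from its junk values.
noncomputable def kFactor (x y : ℤ) (j : ℕ) : ℚ :=
  j ! * ifact (x + y + j + 1) * poch (2 * x + y + 2 * j + 3) j * poch (x + 2 * y + 2 * j + 3) j
    * invfact (x + 2 * j + 1) * invfact (y + 2 * j + 1)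

noncomputable def kProd (n : ℕ) (x y : ℤ) : ℚ := ∏ j ∈ Finset.range n, kFactor x y j

section KProd

variable {x y : ℤ}

lemma kFactor_shift (hxy : 0 ≤ x + y) (j : ℕ) :
    kFactor (x + 2) (y - 1) j * kFactor (x - 1) (y + 2) j
        * ((x + y + j + 3) * (x + 2 * j + 3) * (y + 2 * j + 3))
      = kFactor (x + 1) (y + 1) j * kFactor x y j
        * ((x + y + j + 2) * (x + 2 * j + 1) * (y + 2 * j + 1)) := by
  have hA := ifact_shift (a := x + y + j + 1) (by omega)
  have hB := invfact_shift (x + 2 * j + 1)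
  have hC := invfact_shift (y + 2 * j + 1)
  push_cast at hA hB hC
  unfold kFactor
  linear_combination (norm := ring_nf) (j ! : ℚ) ^ 2 * poch (2 * x + y + 2 * j + 3) j
    * poch (2 * x + y + 2 * j + 6) j * poch (x + 2 * y + 2 * j + 3) j
    * poch (x + 2 * y + 2 * j + 6) j * congr($hA * $hB * $hC)

lemma kFactor_succ (hxy : 0 ≤ x + y) (m : ℕ) :
    kFactor x y (m + 1) * ((x + y + m + 3) * (x + 2 * m + 3) * (y + 2 * m + 3))
      = (m + 1) * (2 * x + y + 2 * m + 5) * (x + 2 * y + 2 * m + 5)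
        * kFactor (x + 1) (y + 1) m := by
  have hA := ifact_add_one (m := x + y + m + 2) (by omega)
  have hB := invfact_eq_mul_invfact_add_one (x + 2 * m + 2)
  have hC := invfact_eq_mul_invfact_add_one (y + 2 * m + 2)
  unfold kFactor
  rw [Nat.factorial_succ, poch_succ, poch_succ]
  push_cast at hA hB hC ⊢
  ring_nf at hA hB hC ⊢
  rw [hA, hB, hC]
  ring

lemma kProd_succ (n : ℕ) (x y : ℤ) : kProd (n + 1) x y = kProd n x y * kFactor x y n :=
  Finset.prod_range_succ _ _

lemma kProd_shift (hxy : 0 ≤ x + y) (n : ℕ) :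
    kProd n (x + 2) (y - 1) * kProd n (x - 1) (y + 2)
        * ((x + y + n + 2) * (x + 2 * n + 1) * (y + 2 * n + 1))
      = kProd n (x + 1) (y + 1) * kProd n x y * ((x + y + 2) * (x + 1) * (y + 1)) := by
  induction n with
  | zero => simp [kProd]
  | succ n ih =>
    simp only [kProd_succ]
    push_cast
    linear_combination kProd n (x + 2) (y - 1) * kProd n (x - 1) (y + 2) * kFactor_shift hxy n
      + kFactor (x + 1) (y + 1) n * kFactor x y n * ih

lemma kProd_condensation (hx : -1 ≤ x) (hy : -1 ≤ y) (hxy : 0 ≤ x + y) (m : ℕ) :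
    kProd (m + 2) x y * kProd m (x + 1) (y + 1)
      = kProd (m + 1) x y * kProd (m + 1) (x + 1) (y + 1)
        - kProd (m + 1) (x + 2) (y - 1) * kProd (m + 1) (x - 1) (y + 2) := by
  have hD : ((x : ℚ) + y + m + 3) * (x + 2 * m + 3) * (y + 2 * m + 3) ≠ 0 := by
    have h₁ : (0 : ℚ) < x + y + m + 3 := by exact_mod_cast (by omega : (0 : ℤ) < x + y + m + 3)
    have h₂ : (0 : ℚ) < x + 2 * m + 3 := by exact_mod_cast (by omega : (0 : ℤ) < x + 2 * m + 3)
    have h₃ : (0 : ℚ) < y + 2 * m + 3 := by exact_mod_cast (by omega : (0 : ℤ) < y + 2 * m + 3)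
    positivity
  have hS := kProd_shift hxy (m + 1)
  rw [kProd_succ m (x + 1) (y + 1)] at hS
  push_cast at hS
  refine mul_right_cancel₀ hD ?_
  rw [kProd_succ (m + 1) x y, kProd_succ m (x + 1) (y + 1)]
  -- the cubic factors `D`, `E`, `N` of `kProd_shift` and `kFactor_succ` satisfy `D - E = N`
  linear_combination kProd (m + 1) x y * kProd m (x + 1) (y + 1) * kFactor_succ hxy m + hS

lemma kFactor_pos (hx : 0 ≤ x) (hy : 0 ≤ y) (j : ℕ) : 0 < kFactor x y j := by
  unfold kFactor
  have := ifact_pos (x + y + j + 1)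
  have := poch_pos (a := 2 * x + y + 2 * j + 3) (by omega) j
  have := poch_pos (a := x + 2 * y + 2 * j + 3) (by omega) j
  have := invfact_pos (m := x + 2 * j + 1) (by omega)
  have := invfact_pos (m := y + 2 * j + 1) (by omega)
  positivity

lemma kProd_pos (hx : 0 ≤ x) (hy : 0 ≤ y) (n : ℕ) : 0 < kProd n x y :=
  Finset.prod_pos fun j _ => kFactor_pos hx hy j

lemma kProd_eq_zero_of_left (hx : x ≤ -2) (n : ℕ) : kProd (n + 1) x y = 0 :=
  Finset.prod_eq_zero (Finset.mem_range.2 n.succ_pos) (by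
    simp [kFactor, invfact_of_neg (show x + 1 < 0 by omega)])

lemma kProd_eq_zero_of_right (hy : y ≤ -2) (n : ℕ) : kProd (n + 1) x y = 0 :=
  Finset.prod_eq_zero (Finset.mem_range.2 n.succ_pos) (by
    simp [kFactor, invfact_of_neg (show y + 1 < 0 by omega)])

end KProd

-- `Kmat n x y i j` is the paper's `K_{i+1,j+1}` for `K_n(x,y)`, with integer `x`, `y`
noncomputable def Kmat (n : ℕ) (x y : ℤ) : Matrix (Fin n) (Fin n) ℚ :=
  Matrix.of fun i j =>
    ifact (x + y + i + j + 1) * invfact (x + 2 * i - j + 1) * invfact (y + 2 * j - i + 1)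

section Kmat

variable {x y : ℤ}

lemma Kmat_submatrix {m n : ℕ} {x' y' : ℤ} {f g : Fin m → Fin n} (r s : ℕ)
    (hf : ∀ i, (f i : ℕ) = i + r) (hg : ∀ j, (g j : ℕ) = j + s)
    (hx : x' = x + 2 * r - s) (hy : y' = y + 2 * s - r) :
    (Kmat n x y).submatrix f g = Kmat m x' y' := by
  ext i j
  simp only [Kmat, Matrix.submatrix_apply, Matrix.of_apply, hf, hg, hx, hy]
  push_cast
  ring_nf

lemma Kmat_submatrix_interior (n : ℕ) :
    (Kmat (n + 2) x y).submatrix (fun k : Fin n => k.succ.castSucc) (fun k => k.succ.castSucc)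
      = Kmat n (x + 1) (y + 1) :=
  Kmat_submatrix 1 1 (fun _ => rfl) (fun _ => rfl) (by ring) (by ring)

lemma Kmat_submatrix_castSucc_castSucc (n : ℕ) :
    (Kmat (n + 1) x y).submatrix Fin.castSucc Fin.castSucc = Kmat n x y :=
  Kmat_submatrix 0 0 (fun _ => rfl) (fun _ => rfl) (by ring) (by ring)

lemma Kmat_submatrix_succ_succ (n : ℕ) :
    (Kmat (n + 1) x y).submatrix Fin.succ Fin.succ = Kmat n (x + 1) (y + 1) :=
  Kmat_submatrix 1 1 (fun _ => rfl) (fun _ => rfl) (by ring) (by ring)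

lemma Kmat_submatrix_succ_castSucc (n : ℕ) :
    (Kmat (n + 1) x y).submatrix Fin.succ Fin.castSucc = Kmat n (x + 2) (y - 1) :=
  Kmat_submatrix 1 0 (fun _ => rfl) (fun _ => rfl) (by ring) (by ring)

lemma Kmat_submatrix_castSucc_succ (n : ℕ) :
    (Kmat (n + 1) x y).submatrix Fin.castSucc Fin.succ = Kmat n (x - 1) (y + 2) :=
  Kmat_submatrix 0 1 (fun _ => rfl) (fun _ => rfl) (by ring) (by ring)

lemma det_Kmat_eq_zero_of_left (hx : x ≤ -2) (n : ℕ) : (Kmat (n + 1) x y).det = 0 :=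
  Matrix.det_eq_zero_of_row_eq_zero 0 fun j => by
    simp [Kmat, invfact_of_neg (show x - j + 1 < 0 by omega)]

lemma det_Kmat_eq_zero_of_right (hy : y ≤ -2) (n : ℕ) : (Kmat (n + 1) x y).det = 0 :=
  Matrix.det_eq_zero_of_column_eq_zero 0 fun i => by
    simp [Kmat, invfact_of_neg (show y - i + 1 < 0 by omega)]

theorem det_Kmat (n : ℕ) (x y : ℤ) (hxy : 0 ≤ x + y) : (Kmat n x y).det = kProd n x y := by
  induction n using Nat.twoStepInduction generalizing x y with
  | zero => simp [kProd]
  | one => simp [Kmat, kProd, kFactor, poch]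
  | more m ih₀ ih₁ =>
    obtain hx | hx := le_or_gt x (-2)
    · rw [det_Kmat_eq_zero_of_left hx, kProd_eq_zero_of_left hx]
    obtain hy | hy := le_or_gt y (-2)
    · rw [det_Kmat_eq_zero_of_right hy, kProd_eq_zero_of_right hy]
    have hcondense := Matrix.det_mul_det_interior (Kmat (m + 2) x y) (by
      rw [Kmat_submatrix_interior, ih₀ _ _ (by omega)]
      exact (kProd_pos (by omega) (by omega) m).ne'.isUnit)
    rw [Kmat_submatrix_interior, Kmat_submatrix_castSucc_castSucc, Kmat_submatrix_succ_succ,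
      Kmat_submatrix_succ_castSucc, Kmat_submatrix_castSucc_succ, ih₀ _ _ (by omega),
      ih₁ _ _ (by omega), ih₁ _ _ (by omega), ih₁ _ _ (by omega), ih₁ _ _ (by omega),
      ← kProd_condensation (by omega) (by omega) hxy] at hcondense
    exact mul_right_cancel₀ (kProd_pos (by omega) (by omega) m).ne' hcondense

end Kmat

theorem det_K_general (n x y : ℕ) :
    Matrix.det (Matrix.of fun i j : Fin n =>
      ifact ((x : ℤ) + y + ((i.val : ℤ) + 1) + ((j.val : ℤ) + 1) - 1)
        * invfact ((x : ℤ) + 2 * ((i.val : ℤ) + 1) - ((j.val : ℤ) + 1))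
        * invfact ((y : ℤ) + 2 * ((j.val : ℤ) + 1) - ((i.val : ℤ) + 1)))
    = ∏ j ∈ Finset.range n,
        ((Nat.factorial j : ℚ) * (Nat.factorial (x + y + (j + 1)) : ℚ)
          * (poch (2 * (x : ℤ) + y + 2 * ((j : ℤ) + 1) + 1) j : ℚ)
          * (poch ((x : ℤ) + 2 * y + 2 * ((j : ℤ) + 1) + 1) j : ℚ))
        / ((Nat.factorial (x + 2 * (j + 1) - 1) : ℚ)
          * (Nat.factorial (y + 2 * (j + 1) - 1) : ℚ)) := by
  calc _ = (Kmat n x y).det := by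
        congr 1
        ext i j
        simp only [Matrix.of_apply, Kmat]
        ring_nf
    _ = kProd n x y := det_Kmat n x y (by positivity)
    _ = _ := Finset.prod_congr rfl fun j _ => ?_
  have ha : (x : ℤ) + y + j + 1 = (x + y + (j + 1) : ℕ) := by push_cast; ring
  have hb : (x : ℤ) + 2 * j + 1 = (x + 2 * (j + 1) - 1 : ℕ) := by omega
  have hc : (y : ℤ) + 2 * j + 1 = (y + 2 * (j + 1) - 1 : ℕ) := by omega
  rw [kFactor, ha, hb, hc, ifact_natCast, invfact_natCast, invfact_natCast]
  ring_nf

/-- **Theorem 1.9**: the determinant evaluation for the matrix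
`K_n(x,y)` with entries `(x+y+i+j-1)! / ((x+2i-j)! (y+2j-i)!)`,
an entry being `0` whenever `x+2i-j < 0` or `y+2j-i < 0`. -/
theorem det_K (n x y : ℕ) (hn : 1 ≤ n) (hxy : 0 < x + y) :
    Matrix.det (Matrix.of fun i j : Fin n =>
      ifact ((x : ℤ) + y + ((i.val : ℤ) + 1) + ((j.val : ℤ) + 1) - 1)
        * invfact ((x : ℤ) + 2 * ((i.val : ℤ) + 1) - ((j.val : ℤ) + 1))
        * invfact ((y : ℤ) + 2 * ((j.val : ℤ) + 1) - ((i.val : ℤ) + 1)))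
    = ∏ j ∈ Finset.range n,
        ((Nat.factorial j : ℚ) * (Nat.factorial (x + y + (j + 1)) : ℚ)
          * (poch (2 * (x : ℤ) + y + 2 * ((j : ℤ) + 1) + 1) j : ℚ)
          * (poch ((x : ℤ) + 2 * y + 2 * ((j : ℤ) + 1) + 1) j : ℚ))
        / ((Nat.factorial (x + 2 * (j + 1) - 1) : ℚ)
          * (Nat.factorial (y + 2 * (j + 1) - 1) : ℚ)) :=
  det_K_general n x y
end

section
/- Let $n$ be a positive integer and let $x$, $y$ be nonnegative integers. Let $A_n(x,y)$ be the $n\times n$ integer matrix with entries $A_{i,j}=\binom{x+y+j}{x-i+2j}-\binom{x+y+j}{x+i+2j}$ for $1\le i,j\le n$, and let $B_n(x,y)$ be the $n\times n$ integer matrix with entries $B_{i,j}=\binom{x+y+j+2n-2i+1}{x+2j+n-i+1}-\binom{x+y+j+2n-2i+1}{x+2j+n-i}$ for $1\le i,j\le n$, where in both matrices $\binom{N}{k}=0$ whenever $k<0$ or $k>N$. Then $(-1)^{n(n+1)/2}\det A_n(x,y)=\det B_n(x,y)$. -/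
/-!
With 1-based indices put `m = n - i`, `N_j = x + y + j`, `K_j = x + 2 j`, so that
`B_{ij} = C(N_j + 2m + 1, K_j + m + 1) - C(N_j + 2m + 1, K_j + m)`. Vandermonde's convolution
turns this into `∑_u d_m(u) C(N_j, K_j + u)` with `d_m(u) = C(2m + 1, m + 1 - u) - C(2m + 1, m - u)`.
By the symmetry of binomial coefficients `d_m` is odd, so pairing `u` with `-u` gives
`B_{ij} = ∑_s d_m(-s) A_{sj}`, i.e. `B = M A`. Reversing the rows of `M` makes it lower
triangular with `-1` on the diagonal, so `det M = sign(rev) (-1)^n = (-1)^(n(n+1)/2)`.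
-/

/-- Binomial coefficient of integers, `0` whenever `k < 0` or `k > N`. -/
def ibin (N k : ℤ) : ℤ := if 0 ≤ k ∧ k ≤ N then (N.toNat.choose k.toNat : ℤ) else 0

open Finset Equiv

lemma ibin_of_neg (N : ℤ) {k : ℤ} (hk : k < 0) : ibin N k = 0 := by
  simp [ibin, not_le.mpr hk]

lemma ibin_of_lt (N : ℤ) {k : ℤ} (hk : N < k) : ibin N k = 0 := by
  simp only [ibin, ite_eq_right_iff]
  omega

@[simp, norm_cast]
lemma ibin_natCast (N k : ℕ) : ibin N k = N.choose k := by
  rcases le_or_gt k N with h | h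
  · simp [ibin, h]
  · rw [ibin_of_lt _ (by omega), Nat.choose_eq_zero_of_lt h, Nat.cast_zero]

lemma ibin_natCast_succ (N : ℕ) (k : ℤ) : ibin (N + 1 : ℕ) k = ibin N (k - 1) + ibin N k := by
  rcases lt_trichotomy k 0 with hk | rfl | hk
  · simp [ibin_of_neg _ hk, ibin_of_neg _ (by omega : k - 1 < 0)]
  · simp [ibin]
    omega
  · obtain ⟨k, rfl⟩ : ∃ m : ℕ, k = m + 1 := ⟨k.toNat - 1, by omega⟩
    rw [add_sub_cancel_right]
    exact_mod_cast Nat.choose_succ_succ' N k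

lemma ibin_natCast_sub (N : ℕ) (k : ℤ) : ibin N (N - k) = ibin N k := by
  rcases lt_or_ge k 0 with hk | hk
  · rw [ibin_of_lt _ (by omega), ibin_of_neg _ hk]
  rcases lt_or_ge (N : ℤ) k with hN | hN
  · rw [ibin_of_lt _ hN, ibin_of_neg _ (by omega)]
  lift k to ℕ using hk
  norm_cast at hN
  rw [← Nat.cast_sub hN, ibin_natCast, ibin_natCast, Nat.choose_symm hN]

lemma ibin_add_eq_sum (a b : ℕ) (K c : ℤ) {s : Finset ℤ}
    (hs : ∀ u, 0 ≤ c - u → c - u ≤ b → u ∈ s) :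
    ibin (a + b : ℕ) (K + c) = ∑ u ∈ s, ibin b (c - u) * ibin a (K + u) := by
  induction b generalizing c with
  | zero =>
    rw [sum_eq_single_of_mem c (hs c (by simp) (by simp))]
    · simp [ibin]
    · intro u _ hu
      rcases lt_or_gt_of_ne (sub_ne_zero.mpr (Ne.symm hu)) with h | h
      · rw [ibin_of_neg _ h, zero_mul]
      · rw [ibin_of_lt _ (by simpa using h), zero_mul]
  | succ b ih =>
    rw [← add_assoc, ibin_natCast_succ, add_sub_assoc,
      ih (c - 1) (fun u h₀ h₁ => hs u (by omega) (by push_cast; omega)),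
      ih c (fun u h₀ h₁ => hs u h₀ (by push_cast; omega)), ← sum_add_distrib]
    refine sum_congr rfl fun u _ => ?_
    rw [ibin_natCast_succ, sub_right_comm, add_mul]

def ibinDiff (M : ℕ) (a : ℤ) : ℤ := ibin M (a + 1) - ibin M a

lemma ibinDiff_odd (k : ℕ) : (fun u : ℤ => ibinDiff (2 * k + 1) (k - u)).Odd := by
  intro u
  simp only [ibinDiff]
  rw [← ibin_natCast_sub (2 * k + 1) (k - -u + 1), ← ibin_natCast_sub (2 * k + 1) (k - -u)]
  push_cast
  ring_nf

lemma sum_Icc_neg_mul_of_odd {R : Type*} [CommRing R] [IsAddTorsionFree R] {d : ℤ → R}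
    (hd : d.Odd) (v : ℤ → R) (n : ℕ) :
    ∑ u ∈ Icc (-n : ℤ) n, d u * v u =
      ∑ s ∈ range n, d (-(s + 1)) * (v (-(s + 1)) - v (s + 1)) := by
  induction n with
  | zero => simp [hd.map_zero]
  | succ n ih =>
    have hIcc : Icc (-(n + 1 : ℕ) : ℤ) (n + 1 : ℕ) =
        insert (-(n + 1 : ℤ)) (insert ((n : ℤ) + 1) (Icc (-n : ℤ) n)) := by
      ext u
      simp only [mem_Icc, mem_insert]
      omega
    rw [hIcc, sum_insert (by simp; omega), sum_insert (by simp), ih, sum_range_succ,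
      show d (n + 1) = -d (-(n + 1)) by rw [← hd, neg_neg]]
    ring

lemma ibinDiff_add_eq_sum (N : ℕ) {k n : ℕ} (hk : k < n) (K : ℤ) :
    ibinDiff (N + (2 * k + 1)) (K + k) =
      ∑ s : Fin n, ibinDiff (2 * k + 1) (k + s + 1) *
        (ibin N (K - (s + 1)) - ibin N (K + (s + 1))) := by
  have window : ∀ c : ℤ, k ≤ c → c ≤ k + 1 → ∀ u, 0 ≤ c - u → c - u ≤ (2 * k + 1 : ℕ) →
      u ∈ Icc (-n : ℤ) n := by
    intro c hc₀ hc₁ u h₀ h₁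
    push_cast at h₁
    simp only [mem_Icc]
    omega
  calc ibinDiff (N + (2 * k + 1)) (K + k)
      = ∑ u ∈ Icc (-n : ℤ) n, ibinDiff (2 * k + 1) (k - u) * ibin N (K + u) := by
        rw [ibinDiff, add_assoc, ibin_add_eq_sum N _ K (k + 1) (window _ (by omega) le_rfl),
          ibin_add_eq_sum N _ K k (window _ le_rfl (by omega)), ← sum_sub_distrib]
        refine sum_congr rfl fun u _ => ?_
        rw [ibinDiff, sub_add_eq_add_sub, sub_mul]
    _ = _ := by
        rw [sum_Icc_neg_mul_of_odd (ibinDiff_odd k), sum_range]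
        refine sum_congr rfl fun s _ => ?_
        rw [sub_neg_eq_add, ← sub_eq_add_neg, add_assoc]

lemma finRotate_mul_revPerm (m : ℕ) :
    finRotate (m + 1) * Fin.revPerm = Perm.decomposeFin.symm (0, Fin.revPerm) := by
  ext i
  refine Fin.cases ?_ (fun j => ?_) i
  · simp
  · have hj := j.isLt
    simp only [Perm.coe_mul, Function.comp_apply, Fin.revPerm_apply, finRotate_apply,
      Perm.decomposeFin_symm_apply_succ, swap_self, refl_apply]
    rw [Fin.val_add_one_of_lt (by simp [Fin.lt_def, Fin.val_rev]; omega)]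
    simp [Fin.val_rev]

lemma Fin.sign_revPerm (n : ℕ) :
    Perm.sign (Fin.revPerm : Perm (Fin n)) = (-1) ^ n.choose 2 := by
  induction n with
  | zero => rfl
  | succ m ih =>
    have h := congrArg Perm.sign (finRotate_mul_revPerm m)
    rw [map_mul, Perm.decomposeFin.symm_sign, if_pos rfl, one_mul, ih, sign_finRotate,
      Nat.succ_sub_one] at h
    rw [Nat.choose_succ_succ', Nat.choose_one_right, pow_add, ← h, ← mul_assoc, ← pow_add,
      ← two_mul, pow_mul, neg_one_sq, one_pow, one_mul]

def ibinDiffTriangle (n : ℕ) : Matrix (Fin n) (Fin n) ℤ :=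
  Matrix.of fun i s => ibinDiff (2 * i + 1) (i + s + 1)

lemma det_ibinDiffTriangle (n : ℕ) : (ibinDiffTriangle n).det = (-1) ^ n := by
  rw [Matrix.det_of_isLowerTriangular _ fun i s (h : i < s) => ?_]
  · have hdiag (i : Fin n) : ibinDiffTriangle n i i = -1 := by
      rw [ibinDiffTriangle, Matrix.of_apply, ibinDiff, ibin_of_lt _ (by push_cast; omega),
        show (i + i + 1 : ℤ) = (2 * i + 1 : ℕ) by push_cast; ring, ibin_natCast,
        Nat.choose_self]
      simp
    simp [hdiag]
  · rw [Fin.lt_def] at h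
    rw [ibinDiffTriangle, Matrix.of_apply, ibinDiff, ibin_of_lt _ (by push_cast; omega),
      ibin_of_lt _ (by push_cast; omega), sub_zero]

section ColumnData

variable {n : ℕ}

def reflectionMatrix (N : Fin n → ℕ) (K : Fin n → ℤ) : Matrix (Fin n) (Fin n) ℤ :=
  Matrix.of fun s j => ibin (N j) (K j - (s + 1)) - ibin (N j) (K j + (s + 1))

/-- `A_n(x,y)` and `B_n(x,y)` are `reflectionMatrix N K` and `ibinDiffMatrix N K` for
`N j = x + y + j + 1` and `K j = x + 2 (j + 1)` (0-based `j`). -/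
def ibinDiffMatrix (N : Fin n → ℕ) (K : Fin n → ℤ) : Matrix (Fin n) (Fin n) ℤ :=
  Matrix.of fun i j => ibinDiff (N j + (2 * i.rev + 1)) (K j + i.rev)

lemma ibinDiffMatrix_eq_mul (N : Fin n → ℕ) (K : Fin n → ℤ) :
    ibinDiffMatrix N K = (ibinDiffTriangle n).submatrix Fin.revPerm id * reflectionMatrix N K := by
  ext i j
  simp only [ibinDiffMatrix, ibinDiffTriangle, reflectionMatrix, Matrix.mul_apply,
    Matrix.submatrix_apply, Matrix.of_apply, Fin.revPerm_apply, id]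
  exact ibinDiff_add_eq_sum (N j) i.rev.isLt (K j)

theorem det_ibinDiffMatrix (N : Fin n → ℕ) (K : Fin n → ℤ) :
    (ibinDiffMatrix N K).det = (-1) ^ (n * (n + 1) / 2) * (reflectionMatrix N K).det := by
  rw [ibinDiffMatrix_eq_mul, Matrix.det_mul, Matrix.det_permute, det_ibinDiffTriangle,
    Fin.sign_revPerm, show n * (n + 1) / 2 = n.choose 2 + n by
      rw [Nat.choose_two_right, ← Nat.triangle_succ, Nat.add_sub_cancel, mul_comm]]
  push_cast
  ring

end ColumnData

theorem detA_eq_detB_general (n x y : ℕ) :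
    (-1 : ℤ) ^ (n * (n + 1) / 2) *
      Matrix.det (Matrix.of fun i j : Fin n =>
        ibin ((x : ℤ) + y + ((j.val : ℤ) + 1))
             ((x : ℤ) - ((i.val : ℤ) + 1) + 2 * ((j.val : ℤ) + 1))
        - ibin ((x : ℤ) + y + ((j.val : ℤ) + 1))
               ((x : ℤ) + ((i.val : ℤ) + 1) + 2 * ((j.val : ℤ) + 1)))
    = Matrix.det (Matrix.of fun i j : Fin n =>
        ibin ((x : ℤ) + y + ((j.val : ℤ) + 1) + 2 * (n : ℤ) - 2 * ((i.val : ℤ) + 1) + 1)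
             ((x : ℤ) + 2 * ((j.val : ℤ) + 1) + (n : ℤ) - ((i.val : ℤ) + 1) + 1)
        - ibin ((x : ℤ) + y + ((j.val : ℤ) + 1) + 2 * (n : ℤ) - 2 * ((i.val : ℤ) + 1) + 1)
               ((x : ℤ) + 2 * ((j.val : ℤ) + 1) + (n : ℤ) - ((i.val : ℤ) + 1))) := by
  convert (det_ibinDiffMatrix (fun j : Fin n => x + y + j + 1) (fun j => x + 2 * (j + 1))).symm
    using 3 <;> ext i j
  · simp only [reflectionMatrix, Matrix.of_apply]
    push_cast
    ring_nf
  · have hi : ((i.rev : ℕ) : ℤ) = n - (i + 1) := by rw [Fin.val_rev]; omega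
    simp only [ibinDiffMatrix, ibinDiff, Matrix.of_apply]
    push_cast
    rw [hi]
    ring_nf

/-- The two determinants `det A_n(x,y)` and `det B_n(x,y)` agree up to the
sign `(-1)^(n(n+1)/2)` (non-intersecting lattice path bijection). -/
theorem detA_eq_detB (n x y : ℕ) (hn : 1 ≤ n) :
    (-1 : ℤ) ^ (n * (n + 1) / 2) *
      Matrix.det (Matrix.of fun i j : Fin n =>
        ibin ((x : ℤ) + y + ((j.val : ℤ) + 1))
             ((x : ℤ) - ((i.val : ℤ) + 1) + 2 * ((j.val : ℤ) + 1))
        - ibin ((x : ℤ) + y + ((j.val : ℤ) + 1))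
               ((x : ℤ) + ((i.val : ℤ) + 1) + 2 * ((j.val : ℤ) + 1)))
    = Matrix.det (Matrix.of fun i j : Fin n =>
        ibin ((x : ℤ) + y + ((j.val : ℤ) + 1) + 2 * (n : ℤ) - 2 * ((i.val : ℤ) + 1) + 1)
             ((x : ℤ) + 2 * ((j.val : ℤ) + 1) + (n : ℤ) - ((i.val : ℤ) + 1) + 1)
        - ibin ((x : ℤ) + y + ((j.val : ℤ) + 1) + 2 * (n : ℤ) - 2 * ((i.val : ℤ) + 1) + 1)
               ((x : ℤ) + 2 * ((j.val : ℤ) + 1) + (n : ℤ) - ((i.val : ℤ) + 1))) :=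
  detA_eq_detB_general n x y
end

section
/- Let $n\ge 1$ and $m\ge 0$ be integers, and let $l_1>l_2>\cdots>l_n$ be integers with $l_1\le m$ and $l_n\ge 1-n$. Then $\det\left(\binom{m}{l_j+i-1}\right)_{1\leq i,j\leq n}=\frac{\prod_{1\le i<j\le n}(l_i-l_j)\,\prod_{i=1}^{n}(m+i-1)!}{\prod_{i=1}^{n}(l_i+n-1)!\,\prod_{i=1}^{n}(m-l_i)!}$, where $\binom{m}{k}=0$ whenever $k<0$ or $k>m$. -/
open Finset Polynomial Matrix
open scoped Nat

theorem Fin.prod_Ioi_eq_prod_range {M : Type*} [CommMonoid M] {n : ℕ} (i : Fin n)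
    (f : ℕ → M) : ∏ j ∈ Ioi i, f j = ∏ u ∈ range (n - 1 - i), f (i + 1 + u) := by
  calc ∏ j ∈ Ioi i, f j = ∏ j ∈ (Ioi i).map Fin.valEmbedding, f j :=
        (prod_map (Ioi i) Fin.valEmbedding f).symm
    _ = _ := by
      rw [Fin.map_valEmbedding_Ioi, ← Finset.Ico_add_one_left_eq_Ioo, prod_Ico_eq_prod_range,
        Nat.sub_sub, Nat.add_comm 1]

theorem Nat.cast_descFactorial_eq_prod_range {R : Type*} [CommRing R] (B : ℕ) :
    ∀ k, (B.descFactorial k : R) = ∏ t ∈ range k, ((B : R) - t)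
  | 0 => by simp
  | k + 1 => by
    rw [Nat.descFactorial_succ, prod_range_succ, ← Nat.cast_descFactorial_eq_prod_range B k,
      Nat.cast_mul, mul_comm]
    rcases le_or_gt k B with hk | hk
    · rw [Nat.cast_sub hk]
    · simp [Nat.descFactorial_eq_zero_iff_lt.mpr hk]

theorem Fin.prod_filter_lt_eq_prod_Ioi {M : Type*} [CommMonoid M] {n : ℕ}
    (f : Fin n → Fin n → M) :
    ∏ p ∈ univ.filter (fun p : Fin n × Fin n => p.1 < p.2), f p.1 p.2
      = ∏ i : Fin n, ∏ j ∈ Ioi i, f i j := by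
  rw [prod_filter, Fintype.prod_prod_type]
  refine prod_congr rfl fun i _ => ?_
  rw [← prod_filter, filter_lt_eq_Ioi]

theorem Matrix.det_eval_eq_det_coeff_mul_det_vandermonde {R : Type*} [CommRing R] {n : ℕ}
    (p : Fin n → R[X]) (hp : ∀ i, (p i).natDegree < n) (x : Fin n → R) :
    det (of fun i j => (p i).eval (x j))
      = det (of fun i k : Fin n => (p i).coeff k) * det (vandermonde x) := by
  rw [← det_transpose (vandermonde x), ← det_mul]
  congr 1
  ext i j
  rw [mul_apply, of_apply, eval_eq_sum_range' (hp i), ← Fin.sum_univ_eq_sum_range]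
  simp [vandermonde_apply]

theorem Polynomial.natDegree_prod_le_card_of_natDegree_le_one {R ι : Type*} [CommSemiring R]
    {s : Finset ι} {f : ι → R[X]} (hf : ∀ t ∈ s, (f t).natDegree ≤ 1) :
    (∏ t ∈ s, f t).natDegree ≤ #s :=
  (natDegree_prod_le s f).trans (by simpa using sum_le_card_nsmul s _ 1 hf)

noncomputable def binomialRowPoly (n m : ℕ) (i : Fin n) : ℚ[X] :=
  (∏ j ∈ Ioi i, (C (j : ℚ) - X)) * ∏ t ∈ range i, (C ((m : ℚ) - t) + X)

section binomialRowPoly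

variable {n m : ℕ}

theorem natDegree_binomialRowPoly_lt (i : Fin n) : (binomialRowPoly n m i).natDegree < n := by
  have h₁ : (∏ j ∈ Ioi i, (C (j : ℚ) - X)).natDegree ≤ n - 1 - i :=
    (natDegree_prod_le_card_of_natDegree_le_one fun _ _ => by compute_degree).trans_eq
      (Fin.card_Ioi i)
  have h₂ : (∏ t ∈ range i, (C ((m : ℚ) - t) + X)).natDegree ≤ (i : ℕ) :=
    (natDegree_prod_le_card_of_natDegree_le_one fun _ _ => by compute_degree).trans_eq
      (card_range i)
  have := i.isLt
  exact (natDegree_mul_le.trans (add_le_add h₁ h₂)).trans_lt (by omega)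

theorem eval_binomialRowPoly (i : Fin n) (x : ℚ) :
    (binomialRowPoly n m i).eval x
      = (∏ j ∈ Ioi i, ((j : ℚ) - x)) * ∏ t ∈ range i, ((m : ℚ) - t + x) := by
  simp [binomialRowPoly, eval_prod]

theorem eval_binomialRowPoly_natCast_of_lt {i j : Fin n} (h : i < j) :
    (binomialRowPoly n m i).eval (j : ℚ) = 0 := by
  rw [eval_binomialRowPoly]
  exact mul_eq_zero_of_left (prod_eq_zero (mem_Ioi.mpr h) (sub_self _)) _

theorem det_eval_binomialRowPoly (x : Fin n → ℚ) :
    det (of fun i j => (binomialRowPoly n m i).eval (x j))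
      = (∏ i : Fin n, ((m + i).descFactorial i : ℚ)) * det (vandermonde x) := by
  set K := ∏ i : Fin n, ((m + i).descFactorial i : ℚ)
  have hdiag : det (of fun i j : Fin n => (binomialRowPoly n m i).eval (j : ℚ))
      = K * det (vandermonde fun j : Fin n => (j : ℚ)) := by
    rw [det_of_isLowerTriangular _ fun i j => eval_binomialRowPoly_natCast_of_lt,
      det_vandermonde, ← prod_mul_distrib]
    refine prod_congr rfl fun i _ => ?_
    rw [of_apply, eval_binomialRowPoly, mul_comm, Nat.cast_descFactorial_eq_prod_range]
    push_cast
    congr 1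
    exact prod_congr rfl fun t _ => by ring
  have hV : det (vandermonde fun j : Fin n => (j : ℚ)) ≠ 0 :=
    det_vandermonde_ne_zero_iff.mpr (Nat.cast_injective.comp Fin.val_injective)
  rw [det_eval_eq_det_coeff_mul_det_vandermonde _ natDegree_binomialRowPoly_lt] at hdiag ⊢
  rw [mul_right_cancel₀ hV hdiag]

theorem eval_binomialRowPoly_sub_natCast {k : ℕ} (hk : k ≤ m) (i : Fin n) :
    (binomialRowPoly n m i).eval ((i : ℚ) - k)
      = (k + 1).ascFactorial (n - 1 - i) * (m - k + i).descFactorial i := by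
  rw [eval_binomialRowPoly, Fin.prod_Ioi_eq_prod_range i fun j => (j : ℚ) - (i - k),
    Nat.ascFactorial_eq_prod_range, Nat.cast_descFactorial_eq_prod_range]
  push_cast [Nat.cast_sub hk]
  congr 1 <;> exact prod_congr rfl fun _ _ => by ring

theorem eval_binomialRowPoly_neg_eq_zero {a : ℤ} (h1 : 1 - n ≤ a) (h2 : a ≤ m) {i : Fin n}
    (h : ¬(0 ≤ a + i ∧ a + i ≤ m)) : (binomialRowPoly n m i).eval (-a : ℚ) = 0 := by
  rw [eval_binomialRowPoly]
  rcases not_and_or.mp h with h | h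
  · refine mul_eq_zero_of_left (prod_eq_zero (i := ⟨(-a).toNat, by omega⟩)
      (by simp [Fin.lt_def]; omega) ?_) _
    have hcast : ((-a).toNat : ℚ) = -a := by exact_mod_cast Int.toNat_of_nonneg (by omega)
    simp [hcast]
  · refine mul_eq_zero_of_right _ (prod_eq_zero (i := (m - a).toNat) (by simp; omega) ?_)
    have hcast : (((m : ℤ) - a).toNat : ℚ) = m - a := by
      exact_mod_cast Int.toNat_of_nonneg (by omega)
    rw [hcast]
    ring

theorem ibin_eq_mul_eval_binomialRowPoly {a : ℤ} (h1 : 1 - n ≤ a) (h2 : a ≤ m)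
    (i : Fin n) :
    (ibin m (a + i) : ℚ)
      = m ! / (ifact (a + n - 1) * ifact (m - a)) * (binomialRowPoly n m i).eval (-a : ℚ) := by
  by_cases h : 0 ≤ a + i ∧ a + i ≤ m
  · obtain ⟨k, hk⟩ := Int.eq_ofNat_of_zero_le h.1
    have hkm : k ≤ m := by omega
    have ha : (-a : ℚ) = i - k := by rw [show a = k - i by omega]; push_cast; ring
    have e1 : (a + n - 1).toNat = k + (n - 1 - i) := by omega
    have e2 : ((m : ℤ) - a).toNat = m - k + i := by omega
    rw [ibin, if_pos h, hk, ifact, ifact, e1, e2, ha, eval_binomialRowPoly_sub_natCast hkm,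
      Int.toNat_natCast, Int.toNat_natCast, ← Nat.factorial_mul_ascFactorial,
      ← Nat.factorial_mul_descFactorial (by omega : i ≤ m - k + i), Nat.add_sub_cancel,
      ← Nat.choose_mul_factorial_mul_factorial hkm]
    push_cast
    field_simp
  · rw [ibin, if_neg h, eval_binomialRowPoly_neg_eq_zero h1 h2 h]
    simp

end binomialRowPoly

/-- **Lemma 2.2** in determinant form: for a strictly decreasing integer
sequence `l 0 > l 1 > ⋯ > l (n-1)` with `l 0 ≤ m` and `l (n-1) ≥ 1-n`,
the determinant `det (C(m, l_j + i - 1))` is given by a product formula. -/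
theorem det_binomial (n m : ℕ) (hn : 1 ≤ n) (l : Fin n → ℤ)
    (hanti : StrictAnti l)
    (hfirst : l ⟨0, hn⟩ ≤ (m : ℤ))
    (hlast : 1 - (n : ℤ) ≤ l ⟨n - 1, Nat.sub_lt hn Nat.one_pos⟩) :
    ((Matrix.det (Matrix.of fun i j : Fin n =>
        ibin (m : ℤ) (l j + (i.val : ℤ))) : ℤ) : ℚ)
    = ((∏ p ∈ Finset.univ.filter (fun p : Fin n × Fin n => p.1 < p.2),
          ((l p.1 - l p.2 : ℤ) : ℚ))
        * ∏ i : Fin n, (Nat.factorial (m + i.val) : ℚ))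
      / ((∏ i : Fin n, ifact (l i + (n : ℤ) - 1))
        * ∏ i : Fin n, ifact ((m : ℤ) - l i)) := by
  have hbounds (j : Fin n) : 1 - (n : ℤ) ≤ l j ∧ l j ≤ m :=
    ⟨hlast.trans (hanti.antitone (Fin.le_def.mpr (Nat.le_sub_one_of_lt j.isLt))),
      (hanti.antitone (Fin.le_def.mpr (Nat.zero_le _))).trans hfirst⟩
  have hentries : (of fun i j : Fin n => ibin m (l j + i)).map (Int.cast : ℤ → ℚ)
      = of fun i j => m ! / (ifact (l j + n - 1) * ifact (m - l j))
          * of (fun i j => (binomialRowPoly n m i).eval (-(l j : ℚ))) i j := by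
    ext i j
    exact ibin_eq_mul_eval_binomialRowPoly (hbounds j).1 (hbounds j).2 i
  have hfact : ∏ i : Fin n, ((m + i) ! : ℚ)
      = (m ! : ℚ) ^ n * ∏ i : Fin n, ((m + i).descFactorial i : ℚ) := by
    simp_rw [← Nat.factorial_mul_descFactorial (Nat.le_add_left _ m), Nat.add_sub_cancel,
      Nat.cast_mul, prod_mul_distrib, prod_const, card_univ, Fintype.card_fin]
  have hvandermonde : det (vandermonde fun j => -(l j : ℚ))
      = ∏ p ∈ univ.filter (fun p : Fin n × Fin n => p.1 < p.2),
          ((l p.1 - l p.2 : ℤ) : ℚ) := by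
    rw [det_vandermonde, Fin.prod_filter_lt_eq_prod_Ioi fun i j => ((l i - l j : ℤ) : ℚ)]
    push_cast
    simp only [neg_sub_neg]
  have hifact (z : ℤ) : ifact z ≠ 0 := by rw [ifact]; positivity
  rw [Int.cast_det, hentries, det_mul_row, det_eval_binomialRowPoly, hvandermonde, hfact,
    prod_div_distrib, prod_const, card_univ, Fintype.card_fin, prod_mul_distrib]
  field_simp [prod_ne_zero_iff.mpr fun i _ => hifact _]
end
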